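/- Let G be a sub-σ-field of F and (X_n) E-valued F-measurable random variables taking values in a metric space E. Suppose there exist, on an extension (Ω̂,F̂,P̂), random variables (X_n^m)_{n,m} (F-measurable), (X^m)_m and X (F̂-measurable) such that: (a) for every ε>0, lim_{m→∞} limsup_{n→∞} P(d(X_n, X_n^m) > ε) = 0; (b) for each m, E[f(X_n^m)Y] → Ê[f(X^m)Y] for all bounded continuous f and bounded G-measurable Y; (c) for every ε>0, lim_{m→∞} P̂(d(X^m, X) > ε) = 0. Then X_n converges G-stably in law to X, i.e. E[f(X_n)Y] → Ê[f(X)Y] for all bounded continuous f and bounded G-measurable Y. -/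

import Mathlib

open MeasureTheory ProbabilityTheory Filter Real Set Topology

noncomputable section

/-- The discretization map of the regular partition with mesh `1/n`. -/
def eta (n : ℕ) (t : ℝ) : ℝ := (⌊t * n⌋ : ℝ) / n

/-- A real-valued standard Brownian motion with respect to a filtration `F`. -/
structure IsBM {Ω : Type*} [MeasurableSpace Ω] (P : Measure Ω)
    (F : ℝ → MeasurableSpace Ω) (W : ℝ → Ω → ℝ) : Prop where
  adapted : ∀ t : ℝ, Measurable[F t] (W t)
  cont : ∀ ω, Continuous fun t => W t ω
  init : ∀ ω, W 0 ω = 0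
  gauss : ∀ s t : ℝ, 0 ≤ s → s ≤ t →
    P.map (fun ω => W t ω - W s ω) = gaussianReal 0 (Real.toNNReal (t - s))
  indep : ∀ s t : ℝ, 0 ≤ s → s ≤ t →
    Indep (MeasurableSpace.comap (fun ω => W t ω - W s ω) inferInstance) (F s) P

/-- An abstract Itô-type stochastic integral operator `si f a b = ∫_a^b f_s dV_s`
with respect to an integrator `V` and a filtration `F`. -/
structure SIop (Ω : Type*) [MeasurableSpace Ω] (P : Measure Ω)
    (F : ℝ → MeasurableSpace Ω) (V : ℝ → Ω → ℝ) where
  si : (ℝ → Ω → ℝ) → ℝ → ℝ → Ω → ℝ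
  si_meas : ∀ f a b, Measurable (si f a b)
  si_add : ∀ f (a b c : ℝ), a ≤ b → b ≤ c →
    ∀ᵐ ω ∂P, si f a c ω = si f a b ω + si f b c ω
  si_const : ∀ (ξ : Ω → ℝ) (a b : ℝ), Measurable[F a] ξ →
    ∀ᵐ ω ∂P, si (fun _ => ξ) a b ω = ξ ω * (V b ω - V a ω)
  si_linear : ∀ f g (a b : ℝ), ∀ᵐ ω ∂P,
    si (fun s ω => f s ω + g s ω) a b ω = si f a b ω + si g a b ω

/-- The predictable σ-field on `ℝ × Ω` associated with the filtration `F`. -/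
def predSigma {Ω : Type*} (F : ℝ → MeasurableSpace Ω) : MeasurableSpace (ℝ × Ω) :=
  MeasurableSpace.generateFrom
    {u | ∃ (s t : ℝ) (A : Set Ω), s < t ∧ MeasurableSet[F s] A ∧ u = Set.Ioc s t ×ˢ A}

/-- A process is predictable if it is measurable with respect to the predictable σ-field. -/
def Predictable {Ω : Type*} (F : ℝ → MeasurableSpace Ω) (f : ℝ → Ω → ℝ) : Prop :=
  Measurable[predSigma F] fun p => f p.1 p.2

/-- The natural filtration `σ(W_s : 0 ≤ s ≤ t)` of a single process. -/
def filtOf {Ω : Type*} (W : ℝ → Ω → ℝ) (t : ℝ) : MeasurableSpace Ω :=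
  ⨆ s ∈ Set.Icc (0:ℝ) t, MeasurableSpace.comap (W s) inferInstance

/-- The natural filtration generated by a family of processes. -/
def filtOfFam {Ω ι : Type*} (W : ι → ℝ → Ω → ℝ) (t : ℝ) : MeasurableSpace Ω :=
  ⨆ i, filtOf (W i) t

/-- `G`-stable convergence in law of `X n` to `Xl`, the latter defined on an
extension `Ω × Ω₀` of the original probability space. -/
def StableConvTo {Ω Ω₀ E : Type*} (G : MeasurableSpace Ω)
    [MeasurableSpace Ω] [MeasurableSpace Ω₀]
    [PseudoMetricSpace E] (P : Measure Ω)
    (X : ℕ → Ω → E) (Phat : Measure (Ω × Ω₀)) (Xl : Ω × Ω₀ → E) : Prop :=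
  ∀ f : E → ℝ, Continuous f → (∃ C, ∀ x, |f x| ≤ C) →
  ∀ Y : Ω → ℝ, Measurable[G] Y → (∃ C, ∀ ω, |Y ω| ≤ C) →
    Tendsto (fun n => ∫ ω, f (X n ω) * Y ω ∂P) atTop
      (𝓝 (∫ p, f (Xl p) * Y p.1 ∂Phat))


/-! For a bounded Lipschitz test function `g` the triangle inequality through `Xm n m` and `Xlm m`
bounds the defect by `D (K δ + 2 ‖g‖ p)`, where `K` is the Lipschitz constant of `g`, `D` bounds
the weight `Y` and `p` is the probability that an approximation is more than `δ` away; (a) and (c)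
make this small. For a nonnegative weight `Y` both sides are integrals of `g` against the finite
measures `(Y • P).map (X n)` and `(Y ∘ fst • P̂).map Xl`, which have equal mass, so the
Portmanteau theorem passes from Lipschitz to all bounded continuous test functions. A general
bounded weight is `(Y + D) - D`. -/

open scoped NNReal ENNReal BoundedContinuousFunction

theorem tendsto_of_forall_eventually_eventually_dist_lt {M ι κ : Type*} [PseudoMetricSpace M]
    {l : Filter ι} {l' : Filter κ} [l'.NeBot] {u : ι → M} {v : ι → κ → M} {w : κ → M} {L : M}
    (hv : ∀ m, Tendsto (fun n => v n m) l (𝓝 (w m))) (hw : Tendsto w l' (𝓝 L))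
    (huv : ∀ ε > 0, ∀ᶠ m in l', ∀ᶠ n in l, dist (u n) (v n m) < ε) :
    Tendsto u l (𝓝 L) := by
  refine Metric.tendsto_nhds.2 fun ε hε => ?_
  obtain ⟨m, huvm, hwm⟩ :=
    ((huv (ε / 3) (by positivity)).and (Metric.tendsto_nhds.1 hw (ε / 3) (by positivity))).exists
  filter_upwards [huvm, Metric.tendsto_nhds.1 (hv m) (ε / 3) (by positivity)] with n h₁ h₂
  linarith [dist_triangle4 (u n) (v n m) (w m) L]

theorem exists_pos_mul_add_mul_lt {a b ε : ℝ} (hb : 0 ≤ b) (hε : 0 < ε) :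
    ∃ δ > 0, ∃ η > 0, ∀ p < η, a * δ + b * p < ε := by
  obtain ⟨δ, hδ, haδ⟩ := exists_pos_mul_lt (half_pos hε) a
  obtain ⟨η, hη, hbη⟩ := exists_pos_mul_lt (half_pos hε) b
  exact ⟨δ, hδ, η, hη, fun p hp => by nlinarith [mul_le_mul_of_nonneg_left hp.le hb]⟩

section WeightedIntegrals

variable {α β E : Type*} [MeasurableSpace α] [MeasurableSpace β] [PseudoMetricSpace E]
  [MeasurableSpace E] [OpensMeasurableSpace E] {μ : Measure α} {ν : Measure β}

theorem integrable_comp_mul [IsFiniteMeasure μ] (g : E →ᵇ ℝ) {A : α → E} (hA : Measurable A)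
    {W : α → ℝ} (hW : Measurable W) {D : ℝ} (hWD : ∀ ω, |W ω| ≤ D) :
    Integrable (fun ω => g (A ω) * W ω) μ :=
  .of_bound ((g.continuous.measurable.comp hA).mul hW).aestronglyMeasurable (‖g‖ * D)
    (ae_of_all _ fun ω => by
      rw [norm_mul, Real.norm_eq_abs (W ω)]
      exact mul_le_mul (g.norm_coe_le_norm _) (hWD ω) (abs_nonneg _) (norm_nonneg _))

theorem abs_integral_comp_mul_sub_le [IsProbabilityMeasure μ] (g : E →ᵇ ℝ) {K : ℝ≥0}
    (hg : LipschitzWith K g) {A B : α → E} (hA : Measurable A) (hB : Measurable B)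
    {W : α → ℝ} (hW : Measurable W) {D : ℝ} (hWD : ∀ ω, |W ω| ≤ D) {δ : ℝ} (hδ : 0 ≤ δ) :
    |∫ ω, g (A ω) * W ω ∂μ - ∫ ω, g (B ω) * W ω ∂μ| ≤
      D * K * δ + 2 * ‖g‖ * D * μ.real {ω | δ < dist (A ω) (B ω)} := by
  set S := {ω | δ < dist (A ω) (B ω)}
  -- `S` need not be measurable (`E` is not assumed separable), so we work with a measurable hull.
  set T := toMeasurable μ S
  have hpt : ∀ ω, |g (A ω) - g (B ω)| ≤ K * δ + 2 * ‖g‖ * T.indicator 1 ω := by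
    intro ω
    by_cases hω : ω ∈ S
    · rw [indicator_of_mem (subset_toMeasurable μ S hω), Pi.one_apply, mul_one]
      have hg₂ := g.dist_le_two_norm (A ω) (B ω)
      rw [Real.dist_eq] at hg₂
      linarith [mul_nonneg K.coe_nonneg hδ]
    · have hT : 0 ≤ T.indicator (1 : α → ℝ) ω := indicator_nonneg (fun _ _ => zero_le_one) ω
      have hgK := hg.dist_le_mul (A ω) (B ω)
      rw [Real.dist_eq] at hgK
      have hle : dist (A ω) (B ω) ≤ δ := not_lt.1 hω
      linarith [mul_le_mul_of_nonneg_left hle K.coe_nonneg,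
        mul_nonneg (mul_nonneg zero_le_two (norm_nonneg g)) hT]
  have hD : 0 ≤ D := by
    obtain ⟨ω⟩ := nonempty_of_isProbabilityMeasure μ
    exact (abs_nonneg _).trans (hWD ω)
  have hind : Integrable (fun ω => 2 * ‖g‖ * T.indicator 1 ω) μ :=
    ((integrable_const 1).indicator (measurableSet_toMeasurable μ S)).const_mul _
  calc |∫ ω, g (A ω) * W ω ∂μ - ∫ ω, g (B ω) * W ω ∂μ|
      = ‖∫ ω, (g (A ω) - g (B ω)) * W ω ∂μ‖ := by
        simp_rw [sub_mul]
        rw [integral_sub (integrable_comp_mul g hA hW hWD) (integrable_comp_mul g hB hW hWD),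
          Real.norm_eq_abs]
    _ ≤ ∫ ω, D * (K * δ + 2 * ‖g‖ * T.indicator 1 ω) ∂μ :=
        norm_integral_le_of_norm_le (((integrable_const _).add hind).const_mul _)
          (ae_of_all _ fun ω => by
            rw [norm_mul, Real.norm_eq_abs, Real.norm_eq_abs, mul_comm]
            exact mul_le_mul (hWD ω) (hpt ω) (abs_nonneg _) hD)
    _ = D * K * δ + 2 * ‖g‖ * D * μ.real S := by
        rw [integral_const_mul, integral_add (integrable_const _) hind, integral_const,
          integral_const_mul, integral_indicator_one (measurableSet_toMeasurable μ S),
          probReal_univ, one_smul, measureReal_def, measure_toMeasurable, ← measureReal_def]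
        ring

theorem tendsto_integral_comp_mul_of_approx [IsProbabilityMeasure μ] [IsProbabilityMeasure ν]
    {X : ℕ → α → E} (hX : ∀ n, Measurable (X n))
    {Xm : ℕ → ℕ → α → E} (hXm : ∀ n m, Measurable (Xm n m))
    {Xlm : ℕ → β → E} (hXlm : ∀ m, Measurable (Xlm m)) {Xl : β → E} (hXl : Measurable Xl)
    {Y : α → ℝ} (hY : Measurable Y) {Z : β → ℝ} (hZ : Measurable Z) {D : ℝ}
    (hYD : ∀ ω, |Y ω| ≤ D) (hZD : ∀ p, |Z p| ≤ D)
    (ha : ∀ δ > 0, Tendsto (fun m =>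
      limsup (fun n => μ.real {ω | δ < dist (X n ω) (Xm n m ω)}) atTop) atTop (𝓝 0))
    (hc : ∀ δ > 0, Tendsto (fun m => ν.real {p | δ < dist (Xlm m p) (Xl p)}) atTop (𝓝 0))
    (g : E →ᵇ ℝ) {K : ℝ≥0} (hg : LipschitzWith K g)
    (hb : ∀ m, Tendsto (fun n => ∫ ω, g (Xm n m ω) * Y ω ∂μ) atTop
      (𝓝 (∫ p, g (Xlm m p) * Z p ∂ν))) :
    Tendsto (fun n => ∫ ω, g (X n ω) * Y ω ∂μ) atTop (𝓝 (∫ p, g (Xl p) * Z p ∂ν)) := by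
  have hD : 0 ≤ D := by
    obtain ⟨ω⟩ := nonempty_of_isProbabilityMeasure μ
    exact (abs_nonneg _).trans (hYD ω)
  have hsmall : ∀ ε > 0, ∃ δ > 0, ∃ η > 0, ∀ p < η, D * K * δ + 2 * ‖g‖ * D * p < ε :=
    fun ε hε => exists_pos_mul_add_mul_lt (by positivity) hε
  refine tendsto_of_forall_eventually_eventually_dist_lt (l' := atTop) hb ?_ fun ε hε => ?_
  · refine Metric.tendsto_nhds.2 fun ε hε => ?_
    obtain ⟨δ, hδ, η, hη, hlt⟩ := hsmall ε hε
    filter_upwards [(hc δ hδ).eventually_lt_const hη] with m hm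
    rw [Real.dist_eq]
    exact (abs_integral_comp_mul_sub_le g hg (hXlm m) hXl hZ hZD hδ.le).trans_lt (hlt _ hm)
  · obtain ⟨δ, hδ, η, hη, hlt⟩ := hsmall ε hε
    filter_upwards [(ha δ hδ).eventually_lt_const hη] with m hm
    have hbdd : IsBoundedUnder (· ≤ ·) atTop fun n => μ.real {ω | δ < dist (X n ω) (Xm n m ω)} :=
      isBoundedUnder_of ⟨1, fun _ => measureReal_le_one⟩
    filter_upwards [eventually_lt_of_limsup_lt hm hbdd] with n hn
    rw [Real.dist_eq]
    exact (abs_integral_comp_mul_sub_le g hg (hX n) (hXm n m) hY hYD hδ.le).trans_lt (hlt _ hn)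

theorem tendsto_integral_of_forall_lipschitz_of_measure_univ_eq {ρs : ℕ → Measure E}
    [∀ n, IsFiniteMeasure (ρs n)] {ρ : Measure E} [IsFiniteMeasure ρ]
    (hmass : ∀ n, ρs n univ = ρ univ)
    (hlip : ∀ (g : E →ᵇ ℝ) (K : ℝ≥0), LipschitzWith K g →
      Tendsto (fun n => ∫ x, g x ∂ρs n) atTop (𝓝 (∫ x, g x ∂ρ)))
    (f : E →ᵇ ℝ) : Tendsto (fun n => ∫ x, f x ∂ρs n) atTop (𝓝 (∫ x, f x ∂ρ)) := by
  obtain h0 | h0 := eq_or_ne (ρ univ) 0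
  · have hρs : ∀ n, ρs n = 0 := fun n => Measure.measure_univ_eq_zero.1 ((hmass n).trans h0)
    simp [hρs, Measure.measure_univ_eq_zero.1 h0]
  set c := ρ univ
  have hc : c ≠ ∞ := measure_ne_top ρ univ
  have hprob : ∀ σ : Measure E, σ univ = c → IsProbabilityMeasure (c⁻¹ • σ) := fun σ hσ =>
    ⟨by simp [hσ, ENNReal.inv_mul_cancel h0 hc]⟩
  let Qs n : ProbabilityMeasure E := ⟨c⁻¹ • ρs n, hprob _ (hmass n)⟩
  let Q : ProbabilityMeasure E := ⟨c⁻¹ • ρ, hprob _ rfl⟩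
  have hscale : ∀ (σ : Measure E) (g : E → ℝ),
      ∫ x, g x ∂(c⁻¹ • σ) = c.toReal⁻¹ * ∫ x, g x ∂σ := by
    intro σ g
    rw [integral_smul_measure, ENNReal.toReal_inv, smul_eq_mul]
  have hQs : Tendsto Qs atTop (𝓝 Q) := by
    refine tendsto_iff_forall_lipschitz_integral_tendsto.2 fun g ⟨C, hC⟩ ⟨K, hg⟩ => ?_
    simp only [Qs, Q, ProbabilityMeasure.coe_mk, hscale]
    exact (hlip (.mkOfBound ⟨g, hg.continuous⟩ C hC) K hg).const_mul _
  have := (ProbabilityMeasure.tendsto_iff_forall_integral_tendsto.1 hQs f).const_mul c.toReal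
  simpa [Qs, Q, hscale, ← mul_assoc, mul_inv_cancel₀ (ENNReal.toReal_ne_zero.2 ⟨h0, hc⟩)]
    using this

theorem integral_map_withDensity_ofReal {A : α → E} (hA : Measurable A) {W : α → ℝ}
    (hW : Measurable W) (hW0 : 0 ≤ W) (g : E →ᵇ ℝ) :
    ∫ x, g x ∂(μ.withDensity fun ω => ENNReal.ofReal (W ω)).map A = ∫ ω, g (A ω) * W ω ∂μ := by
  rw [integral_map hA.aemeasurable g.continuous.aestronglyMeasurable,
    integral_withDensity_eq_integral_toReal_smul hW.ennreal_ofReal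
      (ae_of_all _ fun _ => ENNReal.ofReal_lt_top)]
  simp_rw [ENNReal.toReal_ofReal (hW0 _), smul_eq_mul, mul_comm]

theorem tendsto_integral_comp_mul_of_forall_lipschitz {A : ℕ → α → E} (hA : ∀ n, Measurable (A n))
    {B : β → E} (hB : Measurable B)
    {Y : α → ℝ} (hY : Measurable Y) (hY0 : 0 ≤ Y) (hYi : Integrable Y μ)
    {Z : β → ℝ} (hZ : Measurable Z) (hZ0 : 0 ≤ Z) (hZi : Integrable Z ν)
    (hlip : ∀ (g : E →ᵇ ℝ) (K : ℝ≥0), LipschitzWith K g →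
      Tendsto (fun n => ∫ ω, g (A n ω) * Y ω ∂μ) atTop (𝓝 (∫ p, g (B p) * Z p ∂ν)))
    (f : E →ᵇ ℝ) :
    Tendsto (fun n => ∫ ω, f (A n ω) * Y ω ∂μ) atTop (𝓝 (∫ p, f (B p) * Z p ∂ν)) := by
  have := isFiniteMeasure_withDensity_ofReal hYi.2
  have := isFiniteMeasure_withDensity_ofReal hZi.2
  have hYZ : ∫ ω, Y ω ∂μ = ∫ p, Z p ∂ν := by
    have h₁ := hlip 1 0 (LipschitzWith.const 1)
    simp only [BoundedContinuousFunction.coe_one, Pi.one_apply, one_mul] at h₁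
    exact tendsto_nhds_unique tendsto_const_nhds h₁
  simp only [← integral_map_withDensity_ofReal (hA _) hY hY0,
    ← integral_map_withDensity_ofReal hB hZ hZ0] at hlip ⊢
  refine tendsto_integral_of_forall_lipschitz_of_measure_univ_eq (fun n => ?_) hlip f
  rw [Measure.map_apply (hA n) .univ, Measure.map_apply hB .univ, preimage_univ, preimage_univ,
    withDensity_apply _ .univ, withDensity_apply _ .univ, Measure.restrict_univ,
    Measure.restrict_univ,
    ← ofReal_integral_eq_lintegral_ofReal hYi (ae_of_all _ hY0),
    ← ofReal_integral_eq_lintegral_ofReal hZi (ae_of_all _ hZ0), hYZ]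

theorem tendsto_integral_comp_mul_of_tendsto_add_const [IsFiniteMeasure μ] [IsFiniteMeasure ν]
    (f : E →ᵇ ℝ)
    {A : ℕ → α → E} (hA : ∀ n, Measurable (A n)) {B : β → E} (hB : Measurable B)
    {Y : α → ℝ} (hY : Measurable Y) {Z : β → ℝ} (hZ : Measurable Z) {D : ℝ}
    (hYD : ∀ ω, |Y ω| ≤ D) (hZD : ∀ p, |Z p| ≤ D) (c : ℝ)
    (h₁ : Tendsto (fun n => ∫ ω, f (A n ω) * (Y ω + c) ∂μ) atTop
      (𝓝 (∫ p, f (B p) * (Z p + c) ∂ν)))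
    (h₂ : Tendsto (fun n => ∫ ω, f (A n ω) * c ∂μ) atTop (𝓝 (∫ p, f (B p) * c ∂ν))) :
    Tendsto (fun n => ∫ ω, f (A n ω) * Y ω ∂μ) atTop (𝓝 (∫ p, f (B p) * Z p ∂ν)) := by
  have hA' : ∀ n, ∫ ω, f (A n ω) * (Y ω + c) ∂μ =
      ∫ ω, f (A n ω) * Y ω ∂μ + ∫ ω, f (A n ω) * c ∂μ := fun n => by
    simp_rw [mul_add]
    exact integral_add (integrable_comp_mul f (hA n) hY hYD)
      (integrable_comp_mul (W := fun _ => c) f (hA n) measurable_const fun _ => le_rfl)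
  have hB' : ∫ p, f (B p) * (Z p + c) ∂ν = ∫ p, f (B p) * Z p ∂ν + ∫ p, f (B p) * c ∂ν := by
    simp_rw [mul_add]
    exact integral_add (integrable_comp_mul f hB hZ hZD)
      (integrable_comp_mul (W := fun _ => c) f hB measurable_const fun _ => le_rfl)
  simpa only [hA', hB', add_sub_cancel_right] using h₁.sub h₂

end WeightedIntegrals

theorem stmt1_general {Ω Ω₀ E : Type*} (G : MeasurableSpace Ω)
    [mΩ : MeasurableSpace Ω] [MeasurableSpace Ω₀]
    [MetricSpace E] [MeasurableSpace E] [BorelSpace E]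
    (P : Measure Ω) [IsProbabilityMeasure P]
    (Phat : Measure (Ω × Ω₀)) [IsProbabilityMeasure Phat]
    (hG : G ≤ mΩ)
    (X : ℕ → Ω → E) (hX : ∀ n, Measurable (X n))
    (Xm : ℕ → ℕ → Ω → E) (hXm : ∀ n m, Measurable (Xm n m))
    (Xlm : ℕ → Ω × Ω₀ → E) (hXlm : ∀ m, Measurable (Xlm m))
    (Xl : Ω × Ω₀ → E) (hXl : Measurable Xl)
    (ha : ∀ ε : ℝ, 0 < ε →
      Tendsto (fun m =>
        Filter.limsup (fun n => (P {ω | ε < dist (X n ω) (Xm n m ω)}).toReal) atTop)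
        atTop (𝓝 0))
    (hb : ∀ m, @StableConvTo Ω Ω₀ E G mΩ _ _ P (fun n => Xm n m) Phat (Xlm m))
    (hc : ∀ ε : ℝ, 0 < ε →
      Tendsto (fun m => (Phat {p | ε < dist (Xlm m p) (Xl p)}).toReal) atTop (𝓝 0)) :
    @StableConvTo Ω Ω₀ E G mΩ _ _ P X Phat Xl := by
  intro f hf ⟨C, hC⟩ Y hY ⟨D, hYD⟩
  let fb : E →ᵇ ℝ := .ofNormedAddCommGroup f hf C fun x => (Real.norm_eq_abs _).trans_le (hC x)
  have hweighted : ∀ W : Ω → ℝ, Measurable[G] W → 0 ≤ W → ∀ {D'}, (∀ ω, |W ω| ≤ D') →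
      Tendsto (fun n => ∫ ω, fb (X n ω) * W ω ∂P) atTop (𝓝 (∫ p, fb (Xl p) * W p.1 ∂Phat)) := by
    intro W hW hW0 D' hWD
    have hWm : Measurable W := hW.mono hG le_rfl
    refine tendsto_integral_comp_mul_of_forall_lipschitz hX hXl hWm hW0
      (.of_bound hWm.aestronglyMeasurable D' (ae_of_all _ hWD))
      (hWm.comp measurable_fst) (fun p => hW0 p.1)
      (.of_bound (hWm.comp measurable_fst).aestronglyMeasurable D' (ae_of_all _ fun p => hWD p.1))
      (fun g K hg => ?_) fb
    exact tendsto_integral_comp_mul_of_approx hX hXm hXlm hXl hWm (hWm.comp measurable_fst) hWD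
      (fun p => hWD p.1) ha hc g hg fun m => hb m g g.continuous
        ⟨‖g‖, fun x => (Real.norm_eq_abs _).symm.trans_le (g.norm_coe_le_norm x)⟩ W hW ⟨D', hWD⟩
  have hYm : Measurable Y := hY.mono hG le_rfl
  have hYD' : ∀ ω, 0 ≤ Y ω + D ∧ Y ω + D ≤ 2 * D := fun ω => by
    have := abs_le.1 (hYD ω)
    constructor <;> linarith
  refine tendsto_integral_comp_mul_of_tendsto_add_const fb hX hXl hYm (hYm.comp measurable_fst)
    hYD (fun p => hYD p.1) D ?_ ?_
  · exact hweighted _ (hY.add_const D) (fun ω => (hYD' ω).1)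
      fun ω => abs_le.2 ⟨by linarith [hYD' ω], (hYD' ω).2⟩
  · exact hweighted _ measurable_const (fun ω => (abs_nonneg _).trans (hYD ω)) fun _ => le_rfl

/-- Lemma 2.3: an approximation criterion for `G`-stable convergence in law. -/
theorem stmt1 {Ω Ω₀ E : Type*} (G : MeasurableSpace Ω)
    [mΩ : MeasurableSpace Ω] [MeasurableSpace Ω₀]
    [MetricSpace E] [MeasurableSpace E] [BorelSpace E]
    (P : Measure Ω) [IsProbabilityMeasure P]
    (Phat : Measure (Ω × Ω₀)) [IsProbabilityMeasure Phat]
    (hext : Phat.map Prod.fst = P)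
    (hG : G ≤ mΩ)
    (X : ℕ → Ω → E) (hX : ∀ n, Measurable (X n))
    (Xm : ℕ → ℕ → Ω → E) (hXm : ∀ n m, Measurable (Xm n m))
    (Xlm : ℕ → Ω × Ω₀ → E) (hXlm : ∀ m, Measurable (Xlm m))
    (Xl : Ω × Ω₀ → E) (hXl : Measurable Xl)
    (ha : ∀ ε : ℝ, 0 < ε →
      Tendsto (fun m =>
        Filter.limsup (fun n => (P {ω | ε < dist (X n ω) (Xm n m ω)}).toReal) atTop)
        atTop (𝓝 0))
    (hb : ∀ m, @StableConvTo Ω Ω₀ E G mΩ _ _ P (fun n => Xm n m) Phat (Xlm m))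
    (hc : ∀ ε : ℝ, 0 < ε →
      Tendsto (fun m => (Phat {p | ε < dist (Xlm m p) (Xl p)}).toReal) atTop (𝓝 0)) :
    @StableConvTo Ω Ω₀ E G mΩ _ _ P X Phat Xl :=
  stmt1_general G (mΩ := mΩ) P Phat hG X hX Xm hXm Xlm hXlm Xl hXl ha hb hc
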